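/- arXiv:2410.11240 — 4 statements merged into one kernel-verified Lean document; each statement's English description precedes it below -/
import Mathlib

section
/- Let k ≥ 2 be an integer. There exists a constant C depending only on k such that the following holds: for every N ∈ ℕ, every β ∈ (0,1], and every family ζ₁, …, ζ_N of independent Bernoulli random variables with parameters q₁, …, q_N satisfying q_j ≤ β for all j, setting Γ_j = ζ_j − q_j one has E[(Σ_{j=1}^N Γ_j)^k] ≤ C Σ_{m=1}^{⌊k/2⌋} (Nβ)^m. In particular, if Nβ ≥ 1 then (Nβ)^{−k} E[(Σ_{j=1}^N Γ_j)^k] ≤ C (Nβ)^{−⌈k/2⌉}. -/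
/-!
Expanding `(∑ j, Γ j) ^ k` as a sum over maps `p : Fin k → Fin N` and using independence, each
term becomes `∏ j, E[Γ j ^ c j]`, where `c j` counts the `i` with `p i = j`. Centering kills every
term in which some multiplicity equals one, so a surviving `p` has at most `k / 2` values, and each
of them contributes a factor of modulus at most `β`. At most `N ^ m * m ^ k` maps have exactly `m`
values, which gives the bound `k ^ k * ∑ m ∈ Icc 1 (k / 2), (N * β) ^ m`.
-/

open MeasureTheory ProbabilityTheory Finset

section Bernoulli

variable {Ω : Type*} [MeasurableSpace Ω] {P : Measure Ω} {ζ : Ω → ℝ} {q : ℝ}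

lemma integral_comp_of_map_eq_bernoulli (hζ : AEMeasurable ζ P) (hq0 : 0 ≤ q) (hq1 : q ≤ 1)
    (hmap : P.map ζ =
      ENNReal.ofReal q • Measure.dirac 1 + ENNReal.ofReal (1 - q) • Measure.dirac 0)
    {f : ℝ → ℝ} (hf : Measurable f) :
    ∫ ω, f (ζ ω) ∂P = q * f 1 + (1 - q) * f 0 := by
  rw [← integral_map hζ hf.aestronglyMeasurable, hmap,
    integral_add_measure ((integrable_dirac enorm_lt_top).smul_measure ENNReal.ofReal_ne_top)
      ((integrable_dirac enorm_lt_top).smul_measure ENNReal.ofReal_ne_top),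
    integral_smul_measure, integral_smul_measure, integral_dirac, integral_dirac,
    ENNReal.toReal_ofReal hq0, ENNReal.toReal_ofReal (sub_nonneg.2 hq1), smul_eq_mul, smul_eq_mul]

lemma ae_eq_zero_or_eq_one_of_map_eq_bernoulli (hζ : AEMeasurable ζ P)
    (hmap : P.map ζ =
      ENNReal.ofReal q • Measure.dirac 1 + ENNReal.ofReal (1 - q) • Measure.dirac 0) :
    ∀ᵐ ω ∂P, ζ ω = 0 ∨ ζ ω = 1 := by
  have hs : MeasurableSet {x : ℝ | x = 0 ∨ x = 1} := by measurability
  rw [← ae_map_iff hζ hs, hmap, ae_add_measure_iff]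
  exact ⟨Measure.ae_smul_measure ((ae_dirac_iff hs).2 (Or.inr rfl)) _,
    Measure.ae_smul_measure ((ae_dirac_iff hs).2 (Or.inl rfl)) _⟩

lemma memLp_top_sub_of_map_eq_bernoulli (hζ : AEMeasurable ζ P) [IsFiniteMeasure P]
    (hq0 : 0 ≤ q) (hq1 : q ≤ 1)
    (hmap : P.map ζ =
      ENNReal.ofReal q • Measure.dirac 1 + ENNReal.ofReal (1 - q) • Measure.dirac 0) :
    MemLp (fun ω => ζ ω - q) ⊤ P := by
  refine MemLp.of_bound (hζ.sub_const q).aestronglyMeasurable 1 ?_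
  filter_upwards [ae_eq_zero_or_eq_one_of_map_eq_bernoulli hζ hmap] with ω hω
  rw [Real.norm_eq_abs, abs_le]
  rcases hω with h | h <;> rw [h] <;> constructor <;> linarith

lemma integral_sub_pow_of_map_eq_bernoulli (hζ : AEMeasurable ζ P) (hq0 : 0 ≤ q) (hq1 : q ≤ 1)
    (hmap : P.map ζ =
      ENNReal.ofReal q • Measure.dirac 1 + ENNReal.ofReal (1 - q) • Measure.dirac 0)
    (m : ℕ) :
    ∫ ω, (ζ ω - q) ^ m ∂P = q * (1 - q) ^ m + (1 - q) * (-q) ^ m := by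
  simpa using integral_comp_of_map_eq_bernoulli hζ hq0 hq1 hmap (f := fun x => (x - q) ^ m)
    (by fun_prop)

lemma abs_bernoulli_centralMoment_le (hq0 : 0 ≤ q) (hq1 : q ≤ 1) {m : ℕ} (hm : 2 ≤ m) :
    |q * (1 - q) ^ m + (1 - q) * (-q) ^ m| ≤ q := by
  have h1q : (1 - q) ^ m ≤ 1 - q := pow_le_of_le_one (by linarith) (by linarith) (by omega)
  have hqm : q ^ m ≤ q ^ 2 := pow_le_pow_of_le_one hq0 hq1 hm
  calc |q * (1 - q) ^ m + (1 - q) * (-q) ^ m|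
      ≤ q * (1 - q) ^ m + (1 - q) * q ^ m := by
        grw [abs_add_le, abs_mul, abs_mul, abs_pow, abs_pow, abs_neg, abs_of_nonneg hq0,
          abs_of_nonneg (sub_nonneg.2 hq1)]
    _ ≤ q * (1 - q) + (1 - q) * q ^ 2 := by gcongr
    _ ≤ q := by nlinarith

end Bernoulli

section Combinatorics

variable {α ι : Type*} [Fintype α] [DecidableEq ι]

lemma prod_comp_eq_prod_pow_card_fiber [Fintype ι] {R : Type*} [CommMonoid R] (p : α → ι)
    (x : ι → R) :
    ∏ i, x (p i) = ∏ j, x j ^ #{i | p i = j} := by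
  rw [← prod_fiberwise' univ p x]
  simp only [prod_const]

lemma two_mul_card_image_le (p : α → ι) (hp : ∀ j, #{i | p i = j} ≠ 1) :
    2 * #(univ.image p) ≤ Fintype.card α := by
  rw [← card_univ, card_eq_sum_card_image p univ, mul_comm, ← smul_eq_mul]
  refine card_nsmul_le_sum _ _ _ fun j hj => ?_
  obtain ⟨i, -, rfl⟩ := mem_image.1 hj
  have : 0 < #{i' | p i' = p i} := card_pos.2 ⟨i, by simp⟩
  have := hp (p i)
  omega

lemma card_filter_card_image_eq_le [Fintype ι] [DecidableEq α] (m : ℕ) :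
    #{p : α → ι | #(univ.image p) = m} ≤ Fintype.card ι ^ m * m ^ Fintype.card α := by
  calc #{p : α → ι | #(univ.image p) = m}
      ≤ #((powersetCard m univ).biUnion fun T => Fintype.piFinset fun _ : α => T) := by
        refine card_le_card fun p hp => mem_biUnion.2 ⟨univ.image p, ?_, ?_⟩
        · exact mem_powersetCard.2 ⟨subset_univ _, (mem_filter.1 hp).2⟩
        · exact Fintype.mem_piFinset.2 fun i => mem_image_of_mem p (mem_univ i)
    _ ≤ ∑ T ∈ powersetCard m (univ : Finset ι), #(Fintype.piFinset fun _ : α => T) :=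
        card_biUnion_le
    _ = (Fintype.card ι).choose m * m ^ Fintype.card α := by
        rw [sum_congr rfl fun T hT => by
          rw [Fintype.card_piFinset, prod_const, (mem_powersetCard.1 hT).2, card_univ]]
        rw [sum_const, card_powersetCard, card_univ, smul_eq_mul]
    _ ≤ Fintype.card ι ^ m * m ^ Fintype.card α := by
        gcongr; exact Nat.choose_le_pow _ _

variable [Fintype ι] {β : ℝ} {M : ι → ℕ → ℝ}

lemma abs_prod_fiber_le (hM0 : ∀ j, M j 0 = 1) (hM : ∀ j m, 2 ≤ m → |M j m| ≤ β)
    (p : α → ι) (hp : ∀ j, #{i | p i = j} ≠ 1) :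
    |∏ j, M j #{i | p i = j}| ≤ β ^ #(univ.image p) := by
  have hout : ∀ j ∉ univ.image p, M j #{i | p i = j} = 1 := fun j hj => by
    rw [card_eq_zero.2 (by simpa [filter_eq_empty_iff] using hj), hM0]
  rw [← prod_subset (subset_univ _) fun j _ hj => hout j hj, abs_prod, ← prod_const]
  refine prod_le_prod (fun j _ => abs_nonneg _) fun j hj => hM j _ ?_
  obtain ⟨i, -, rfl⟩ := mem_image.1 hj
  have : 0 < #{i' | p i' = p i} := card_pos.2 ⟨i, by simp⟩
  have := hp (p i)
  omega

lemma prod_fiber_le [Nonempty α] (hβ : 0 ≤ β) (hM0 : ∀ j, M j 0 = 1) (hM1 : ∀ j, M j 1 = 0)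
    (hM : ∀ j m, 2 ≤ m → |M j m| ≤ β) (p : α → ι) :
    ∏ j, M j #{i | p i = j} ≤
      if #(univ.image p) ∈ Icc 1 (Fintype.card α / 2) then β ^ #(univ.image p) else 0 := by
  by_cases hp : ∀ j, #{i | p i = j} ≠ 1
  · have hrange : #(univ.image p) ∈ Icc 1 (Fintype.card α / 2) := by
      have := two_mul_card_image_le p hp
      have : 0 < #(univ.image p) := card_pos.2 (univ_nonempty.image p)
      rw [mem_Icc]
      omega
    rw [if_pos hrange]
    exact (le_abs_self _).trans (abs_prod_fiber_le hM0 hM p hp)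
  · push Not at hp
    obtain ⟨j, hj⟩ := hp
    rw [prod_eq_zero (mem_univ j) (by rw [hj, hM1])]
    split_ifs <;> positivity

lemma sum_pow_card_image_le [DecidableEq α] (hβ : 0 ≤ β) (t : Finset ℕ)
    (ht : ∀ m ∈ t, m ≤ Fintype.card α) :
    ∑ p : α → ι with #(univ.image p) ∈ t, β ^ #(univ.image p) ≤
      Fintype.card α ^ Fintype.card α * ∑ m ∈ t, (Fintype.card ι * β) ^ m := by
  rw [← sum_fiberwise_of_maps_to (t := t) (g := fun p : α → ι => #(univ.image p))
    fun p hp => (mem_filter.1 hp).2, mul_sum]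
  refine sum_le_sum fun m hm => ?_
  calc ∑ p ∈ {p : α → ι | #(univ.image p) ∈ t} with #(univ.image p) = m, β ^ #(univ.image p)
      = #{p ∈ {p : α → ι | #(univ.image p) ∈ t} | #(univ.image p) = m} * β ^ m := by
        rw [sum_congr rfl fun p hp => by rw [(mem_filter.1 hp).2], sum_const, nsmul_eq_mul]
    _ ≤ #{p : α → ι | #(univ.image p) = m} * β ^ m := by
        gcongr
        exact filter_subset _ _
    _ ≤ (Fintype.card ι ^ m * m ^ Fintype.card α : ℕ) * β ^ m := by
        gcongr; exact card_filter_card_image_eq_le (α := α) m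
    _ = (m : ℝ) ^ Fintype.card α * (Fintype.card ι * β) ^ m := by push_cast; ring
    _ ≤ Fintype.card α ^ Fintype.card α * (Fintype.card ι * β) ^ m := by
        gcongr; exact ht m hm

theorem sum_prod_fiber_le [Nonempty α] [DecidableEq α] (hβ : 0 ≤ β) (hM0 : ∀ j, M j 0 = 1)
    (hM1 : ∀ j, M j 1 = 0) (hM : ∀ j m, 2 ≤ m → |M j m| ≤ β) :
    ∑ p : α → ι, ∏ j, M j #{i | p i = j} ≤
      Fintype.card α ^ Fintype.card α *
        ∑ m ∈ Icc 1 (Fintype.card α / 2), (Fintype.card ι * β) ^ m := by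
  calc ∑ p : α → ι, ∏ j, M j #{i | p i = j}
      ≤ ∑ p : α → ι, if #(univ.image p) ∈ Icc 1 (Fintype.card α / 2)
          then β ^ #(univ.image p) else 0 :=
        sum_le_sum fun p _ => prod_fiber_le hβ hM0 hM1 hM p
    _ = ∑ p : α → ι with #(univ.image p) ∈ Icc 1 (Fintype.card α / 2), β ^ #(univ.image p) :=
        (sum_filter _ _).symm
    _ ≤ _ :=
        sum_pow_card_image_le hβ _ fun m hm => (mem_Icc.1 hm).2.trans (Nat.div_le_self _ 2)

end Combinatorics

section Moments

variable {Ω ι : Type*} [MeasurableSpace Ω] {P : Measure Ω} [Fintype ι] [DecidableEq ι]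
  {X : ι → Ω → ℝ}

lemma integral_sum_pow_eq_sum_prod_integral_pow (hX : iIndepFun X P)
    (hbdd : ∀ j, MemLp (X j) ⊤ P) (k : ℕ) :
    ∫ ω, (∑ j, X j ω) ^ k ∂P = ∑ p : Fin k → ι, ∏ j, ∫ ω, X j ω ^ #{i | p i = j} ∂P := by
  have := hX.isProbabilityMeasure
  have hexpand : ∀ ω, (∑ j, X j ω) ^ k = ∑ p : Fin k → ι, ∏ i, X (p i) ω := fun ω => by
    rw [← Fin.prod_const, Fintype.prod_sum]
  simp_rw [hexpand]
  rw [integral_finsetSum _ fun p _ => (MemLp.prod' fun i _ => hbdd (p i)).integrable (by simp)]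
  refine sum_congr rfl fun p _ => ?_
  have hfiber ω : ∏ i, X (p i) ω = ∏ j, X j ω ^ #{i | p i = j} :=
    prod_comp_eq_prod_pow_card_fiber p (X · ω)
  simp_rw [hfiber]
  exact hX.integral_fun_prod_comp (f := fun j x => x ^ #{i | p i = j})
    (fun j => (hbdd j).aestronglyMeasurable.aemeasurable) fun j => by fun_prop

theorem integral_sum_pow_le_of_iIndepFun (hX : iIndepFun X P) (hbdd : ∀ j, MemLp (X j) ⊤ P)
    (hmean : ∀ j, ∫ ω, X j ω ∂P = 0) {β : ℝ} (hβ : 0 ≤ β)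
    (hmom : ∀ j m, 2 ≤ m → |∫ ω, X j ω ^ m ∂P| ≤ β) {k : ℕ} (hk : 0 < k) :
    ∫ ω, (∑ j, X j ω) ^ k ∂P ≤ k ^ k * ∑ m ∈ Icc 1 (k / 2), (Fintype.card ι * β) ^ m := by
  have := hX.isProbabilityMeasure
  have : Nonempty (Fin k) := ⟨⟨0, hk⟩⟩
  rw [integral_sum_pow_eq_sum_prod_integral_pow hX hbdd]
  simpa using sum_prod_fiber_le (α := Fin k) (M := fun j m => ∫ ω, X j ω ^ m ∂P) hβ
    (fun j => by simp) (fun j => by simpa using hmean j) hmom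

end Moments

lemma inv_pow_mul_sum_Icc_pow_le {x : ℝ} (hx : 1 ≤ x) (k : ℕ) :
    (x ^ k)⁻¹ * ∑ m ∈ Icc 1 (k / 2), x ^ m ≤ k * (x ^ ((k + 1) / 2))⁻¹ := by
  have hsum : ∑ m ∈ Icc 1 (k / 2), x ^ m ≤ k * x ^ (k / 2) := calc
    ∑ m ∈ Icc 1 (k / 2), x ^ m ≤ ∑ _m ∈ Icc 1 (k / 2), x ^ (k / 2) :=
        sum_le_sum fun m hm => pow_le_pow_right₀ hx (mem_Icc.1 hm).2
    _ = (k / 2 : ℕ) * x ^ (k / 2) := by simp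
    _ ≤ k * x ^ (k / 2) := by gcongr; exact_mod_cast Nat.div_le_self k 2
  have hsplit : x ^ k = x ^ (k / 2) * x ^ ((k + 1) / 2) := by rw [← pow_add]; congr 1; omega
  have hx0 : 0 < x := one_pos.trans_le hx
  calc (x ^ k)⁻¹ * ∑ m ∈ Icc 1 (k / 2), x ^ m ≤ (x ^ k)⁻¹ * (k * x ^ (k / 2)) := by gcongr
    _ = k * (x ^ ((k + 1) / 2))⁻¹ := by rw [hsplit]; field_simp

/-- Centered moment bound for sums of independent Bernoulli random variables.
For every integer `k ≥ 2` there is a constant `C = C(k)` such that for all `N`, all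
`β ∈ (0,1]` and all independent Bernoulli random variables `ζ₁, …, ζ_N` with parameters
`q_j ≤ β`, setting `Γ_j = ζ_j − q_j`, one has
`E[(Σ_j Γ_j)^k] ≤ C Σ_{m=1}^{⌊k/2⌋} (Nβ)^m`; in particular, if `Nβ ≥ 1` then
`(Nβ)^{−k} E[(Σ_j Γ_j)^k] ≤ C (Nβ)^{−⌈k/2⌉}`. -/
theorem bernoulli_centered_sum_moment_bound (k : ℕ) (hk : 2 ≤ k) :
    ∃ C : ℝ, 0 < C ∧
      ∀ (N : ℕ) (β : ℝ), β ∈ Set.Ioc (0 : ℝ) 1 →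
      ∀ (Ω : Type) [MeasurableSpace Ω] (P : Measure Ω) [IsProbabilityMeasure P]
        (ζ : Fin N → Ω → ℝ) (q : Fin N → ℝ),
        (∀ j, Measurable (ζ j)) →
        (∀ j, 0 ≤ q j) → (∀ j, q j ≤ β) →
        (∀ j, Measure.map (ζ j) P =
          ENNReal.ofReal (q j) • Measure.dirac (1 : ℝ) +
            ENNReal.ofReal (1 - q j) • Measure.dirac (0 : ℝ)) →
        iIndepFun ζ P →
        (∫ ω, (∑ j, (ζ j ω - q j)) ^ k ∂P ≤
            C * ∑ m ∈ Finset.Icc 1 (k / 2), ((N : ℝ) * β) ^ m) ∧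
        (1 ≤ (N : ℝ) * β →
          (((N : ℝ) * β) ^ k)⁻¹ * ∫ ω, (∑ j, (ζ j ω - q j)) ^ k ∂P ≤
            C * ((((N : ℝ) * β) ^ ((k + 1) / 2))⁻¹)) := by
  refine ⟨k ^ k * k, by positivity, fun N β ⟨hβ0, hβ1⟩ Ω _ P _ ζ q hζ hq0 hqβ hmap hind => ?_⟩
  have hq1 j : q j ≤ 1 := (hqβ j).trans hβ1
  have hmoment j :=
    integral_sub_pow_of_map_eq_bernoulli (hζ j).aemeasurable (hq0 j) (hq1 j) (hmap j)
  have hbound : ∫ ω, (∑ j, (ζ j ω - q j)) ^ k ∂P ≤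
      k ^ k * ∑ m ∈ Icc 1 (k / 2), ((N : ℝ) * β) ^ m := by
    simpa using integral_sum_pow_le_of_iIndepFun (X := fun j ω => ζ j ω - q j)
      (hind.comp _ fun j => measurable_sub_const (q j))
      (fun j => memLp_top_sub_of_map_eq_bernoulli (hζ j).aemeasurable (hq0 j) (hq1 j) (hmap j))
      (fun j => by simpa using (hmoment j 1).trans (by ring)) hβ0.le
      (fun j m hm => by
        rw [hmoment]; exact (abs_bernoulli_centralMoment_le (hq0 j) (hq1 j) hm).trans (hqβ j))
      (by omega)
  have hk1 : (1 : ℝ) ≤ k := by exact_mod_cast (by omega : 1 ≤ k)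
  refine ⟨hbound.trans (by gcongr; exact le_mul_of_one_le_right (by positivity) hk1), fun hx => ?_⟩
  set x := (N : ℝ) * β
  calc (x ^ k)⁻¹ * ∫ ω, (∑ j, (ζ j ω - q j)) ^ k ∂P
      ≤ (x ^ k)⁻¹ * (k ^ k * ∑ m ∈ Icc 1 (k / 2), x ^ m) := by gcongr
    _ = k ^ k * ((x ^ k)⁻¹ * ∑ m ∈ Icc 1 (k / 2), x ^ m) := by ring
    _ ≤ k ^ k * (k * (x ^ ((k + 1) / 2))⁻¹) :=
        mul_le_mul_of_nonneg_left (inv_pow_mul_sum_Icc_pow_le hx k) (by positivity)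
    _ = k ^ k * k * (x ^ ((k + 1) / 2))⁻¹ := by ring
end

section
/- Let g, h : [0,1]² → [0,∞) be Borel-measurable and let (μ^y)_{y∈[0,1]} and (μ′^y)_{y∈[0,1]} be measurable families of Borel probability measures on ℝⁿ. Then the function y ↦ d_BL(μ^y, μ′^y) is measurable, and for every x ∈ [0,1] with ∫₀¹ g(x,y) dy < ∞ and ∫₀¹ h(x,y) dy < ∞ the graphon mixtures satisfy d_BL(ν^{g,μ,x}, ν^{h,μ′,x}) ≤ ∫₀¹ |g(x,y) − h(x,y)| dy + ∫₀¹ h(x,y) d_BL(μ^y, μ′^y) dy. -/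
open MeasureTheory

/-- The set of continuous functions `ℝⁿ → ℝ` that are `1`-Lipschitz and bounded by `1`. -/
def oneLipb (n : ℕ) : Set (EuclideanSpace ℝ (Fin n) → ℝ) :=
  {f | Continuous f ∧ (∀ x y, |f x - f y| ≤ ‖x - y‖) ∧ ∀ x, |f x| ≤ 1}

/-- The bounded-Lipschitz distance `d_BL(μ,ν) = sup_{f ∈ 1-Lip_b} (∫ f dμ − ∫ f dν)` between
finite nonnegative Borel measures on `ℝⁿ`. -/
noncomputable def dBL {n : ℕ} (μ ν : Measure (EuclideanSpace ℝ (Fin n))) : ℝ :=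
  ⨆ f : oneLipb n, (∫ x, f.1 x ∂μ - ∫ x, f.1 x ∂ν)

/-!
Testing a function `f ∈ 1-Lip_b` against the two mixtures gives `∫ g I - ∫ h I'`, where
`I y = ∫ f dμ^y` and `I' y = ∫ f dμ'^y`. Writing `g I - h I' = (g - h) I + h (I - I')` and using
`|I| ≤ 1` and `I - I' ≤ d_BL(μ^y, μ'^y)` bounds the integrand pointwise in `y`.

Measurability of `y ↦ d_BL(μ^y, μ'^y)` comes from reducing the supremum to a countable one:
`1-Lip_b` is equicontinuous and `ℝⁿ` is separable, so one sequence in `1-Lip_b` approximates each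
of its members pointwise along a subsequence, and dominated convergence passes to the integrals.
-/

open ProbabilityTheory Filter Topology Set

theorem Equicontinuous.exists_seq_forall_exists_subseq_tendsto {X α : Type*}
    [TopologicalSpace X] [TopologicalSpace.SeparableSpace X] [UniformSpace α]
    [SecondCountableTopology α] {S : Set (X → α)} [Nonempty S]
    (hS : Equicontinuous ((↑) : S → X → α)) :
    ∃ d : ℕ → S, ∀ f ∈ S, ∃ φ : ℕ → ℕ,
      ∀ x, Tendsto (fun k => (d (φ k) : X → α) x) atTop (𝓝 (f x)) := by
  obtain ⟨s, hs_count, hs_dense⟩ := TopologicalSpace.exists_countable_dense X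
  have := hs_count.to_subtype
  let r : S → s → α := fun f i => (f : X → α) i
  obtain ⟨u, hu⟩ := TopologicalSpace.exists_dense_seq (range r)
  choose d hd using fun k => (u k).2
  refine ⟨d, fun f hf => ?_⟩
  obtain ⟨v, hv_mem, hv_lim⟩ := mem_closure_iff_seq_limit.1 (hu ⟨r ⟨f, hf⟩, mem_range_self _⟩)
  choose φ hφ using hv_mem
  refine ⟨φ, fun x => ?_⟩
  have hlim : Tendsto (fun k => r (d (φ k))) atTop (𝓝 (r ⟨f, hf⟩)) := by
    simpa [Function.comp_def, hd, hφ] using (continuous_subtype_val.tendsto _).comp hv_lim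
  have hclosed := (hS.comp (d ∘ φ)).isClosed_setOfPred_tendsto (l := atTop)
    (hS.continuous ⟨f, hf⟩)
  exact hclosed.closure_subset_iff.2 (fun i hi => tendsto_pi_nhds.1 hlim ⟨i, hi⟩) (hs_dense x)

/-- `P F` for closed `F` is a decreasing limit of integrals of bounded continuous functions, each
weakly continuous in `P`, and closed sets generate the σ-algebra of `Ω`. -/
theorem MeasureTheory.ProbabilityMeasure.measurableSpace_le_borel {Ω : Type*}
    [TopologicalSpace Ω] [TopologicalSpace.PseudoMetrizableSpace Ω] [MeasurableSpace Ω]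
    [BorelSpace Ω] :
    (inferInstance : MeasurableSpace (ProbabilityMeasure Ω)) ≤ borel (ProbabilityMeasure Ω) := by
  borelize (ProbabilityMeasure Ω)
  refine Measurable.comap_le (Measurable.measure_of_isPiSystem_of_isProbabilityMeasure
    (μ := fun P : ProbabilityMeasure Ω => (P : Measure Ω))
    (BorelSpace.measurable_eq.trans borel_eq_generateFrom_isClosed) isPiSystem_isClosed
    fun F hF => ?_)
  exact measurable_of_tendsto_metrizable
    (fun k => (ProbabilityMeasure.continuous_lintegral_boundedContinuousFunction _).measurable)
    (tendsto_pi_nhds.2 fun P => HasOuterApproxClosed.tendsto_lintegral_apprSeq hF P)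

namespace ProbabilityTheory.Kernel

variable {α Ω : Type*} [MeasurableSpace α] [MeasurableSpace Ω]

noncomputable def ofProbabilityMeasure {μ : α → ProbabilityMeasure Ω} (hμ : Measurable μ) :
    Kernel α Ω :=
  ⟨fun a => μ a, measurable_subtype_coe.comp hμ⟩

instance {μ : α → ProbabilityMeasure Ω} (hμ : Measurable μ) :
    IsMarkovKernel (ofProbabilityMeasure hμ) :=
  ⟨fun a => (μ a).prop⟩

end ProbabilityTheory.Kernel

theorem MeasureTheory.Measure.integral_comp {α β E : Type*} [MeasurableSpace α]
    [MeasurableSpace β] [NormedAddCommGroup E] [NormedSpace ℝ E] {μ : Measure α} [SFinite μ]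
    {κ : Kernel α β} [IsSFiniteKernel κ] {f : β → E} (hf : Integrable f (κ ∘ₘ μ)) :
    ∫ z, f z ∂(κ ∘ₘ μ) = ∫ a, ∫ z, f z ∂κ a ∂μ := by
  rw [Measure.comp_eq_comp_const_apply] at hf ⊢
  rw [Kernel.integral_comp hf]
  simp

theorem integral_mixture {α E F : Type*} [MeasurableSpace α] [MeasurableSpace E]
    [NormedAddCommGroup F] [NormedSpace ℝ F] {ρ : Measure α} [SFinite ρ] {κ : Kernel α E}
    [IsSFiniteKernel κ] {G : α → ℝ} (hG : Measurable G) (hG₀ : ∀ a, 0 ≤ G a) {ν : Measure E}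
    (hν : ∀ A, MeasurableSet A → ν A = ∫⁻ a, ENNReal.ofReal (G a) * κ a A ∂ρ)
    {f : E → F} (hf : Integrable f ν) :
    ∫ z, f z ∂ν = ∫ a, G a • ∫ z, f z ∂κ a ∂ρ := by
  have hν_eq : ν = κ ∘ₘ ρ.withDensity (fun a => ENNReal.ofReal (G a)) := by
    ext A hA
    rw [hν A hA, Measure.bind_apply hA κ.aemeasurable,
      lintegral_withDensity_eq_lintegral_mul _ hG.ennreal_ofReal (κ.measurable_coe hA)]
    rfl
  subst hν_eq
  rw [Measure.integral_comp hf, integral_withDensity_eq_integral_toReal_smul hG.ennreal_ofReal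
    (ae_of_all _ fun _ => ENNReal.ofReal_lt_top)]
  simp only [ENNReal.toReal_ofReal (hG₀ _)]

theorem integral_mul_sub_integral_mul_le {α : Type*} [MeasurableSpace α] {ρ : Measure α}
    {G H I J D : α → ℝ} (hG : Integrable G ρ) (hH : Integrable H ρ) (hH₀ : ∀ a, 0 ≤ H a)
    (hI : AEStronglyMeasurable I ρ) (hJ : AEStronglyMeasurable J ρ) (hI₁ : ∀ a, |I a| ≤ 1)
    (hJ₁ : ∀ a, |J a| ≤ 1) (hHD : Integrable (fun a => H a * D a) ρ)
    (hIJ : ∀ a, I a - J a ≤ D a) :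
    ∫ a, G a * I a ∂ρ - ∫ a, H a * J a ∂ρ ≤ ∫ a, |G a - H a| ∂ρ + ∫ a, H a * D a ∂ρ := by
  have hGI : Integrable (fun a => G a * I a) ρ :=
    hG.mul_bdd hI (ae_of_all _ fun a => (Real.norm_eq_abs _).trans_le (hI₁ a))
  have hHJ : Integrable (fun a => H a * J a) ρ :=
    hH.mul_bdd hJ (ae_of_all _ fun a => (Real.norm_eq_abs _).trans_le (hJ₁ a))
  have hGH : Integrable (fun a => |G a - H a|) ρ := (hG.sub hH).abs
  rw [← integral_sub hGI hHJ, ← integral_add hGH hHD]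
  refine integral_mono (hGI.sub hHJ) (hGH.add hHD) fun a => ?_
  have hdiff : (G a - H a) * I a ≤ |G a - H a| := by
    refine (le_abs_self _).trans ?_
    rw [abs_mul]
    exact mul_le_of_le_one_right (abs_nonneg _) (hI₁ a)
  have hshift : H a * (I a - J a) ≤ H a * D a := mul_le_mul_of_nonneg_left (hIJ a) (hH₀ a)
  linarith

section BoundedLipschitz

variable {n : ℕ}

theorem lipschitzWith_one_of_mem_oneLipb {f : EuclideanSpace ℝ (Fin n) → ℝ}
    (hf : f ∈ oneLipb n) : LipschitzWith 1 f :=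
  LipschitzWith.of_dist_le_mul fun x y => by simpa [Real.dist_eq, dist_eq_norm] using hf.2.1 x y

theorem norm_le_one_of_mem_oneLipb {f : EuclideanSpace ℝ (Fin n) → ℝ} (hf : f ∈ oneLipb n)
    (z : EuclideanSpace ℝ (Fin n)) : ‖f z‖ ≤ 1 :=
  (Real.norm_eq_abs _).trans_le (hf.2.2 z)

instance : Nonempty (oneLipb n) := ⟨⟨0, continuous_const, by simp, by simp⟩⟩

theorem integrable_of_mem_oneLipb {f : EuclideanSpace ℝ (Fin n) → ℝ} (hf : f ∈ oneLipb n)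
    (P : Measure (EuclideanSpace ℝ (Fin n))) [IsFiniteMeasure P] : Integrable f P :=
  .of_bound hf.1.aestronglyMeasurable 1 (ae_of_all _ (norm_le_one_of_mem_oneLipb hf))

theorem abs_integral_le_of_mem_oneLipb {f : EuclideanSpace ℝ (Fin n) → ℝ} (hf : f ∈ oneLipb n)
    (P : Measure (EuclideanSpace ℝ (Fin n))) [IsFiniteMeasure P] :
    |∫ z, f z ∂P| ≤ P.real univ := by
  simpa using
    norm_integral_le_of_norm_le_const (μ := P) (ae_of_all _ (norm_le_one_of_mem_oneLipb hf))

theorem sub_integral_le_mass_add_mass_of_mem_oneLipb {f : EuclideanSpace ℝ (Fin n) → ℝ}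
    (hf : f ∈ oneLipb n)
    (P Q : Measure (EuclideanSpace ℝ (Fin n))) [IsFiniteMeasure P] [IsFiniteMeasure Q] :
    ∫ z, f z ∂P - ∫ z, f z ∂Q ≤ P.real univ + Q.real univ := by
  have hP := abs_le.1 (abs_integral_le_of_mem_oneLipb hf P)
  have hQ := abs_le.1 (abs_integral_le_of_mem_oneLipb hf Q)
  linarith [hP.2, hQ.1]

theorem bddAbove_range_sub_integral_oneLipb (P Q : Measure (EuclideanSpace ℝ (Fin n)))
    [IsFiniteMeasure P] [IsFiniteMeasure Q] :
    BddAbove (range fun f : oneLipb n => ∫ z, f.1 z ∂P - ∫ z, f.1 z ∂Q) :=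
  ⟨_, forall_mem_range.2 fun f => sub_integral_le_mass_add_mass_of_mem_oneLipb f.2 P Q⟩

theorem sub_integral_le_dBL {f : EuclideanSpace ℝ (Fin n) → ℝ} (hf : f ∈ oneLipb n)
    (P Q : Measure (EuclideanSpace ℝ (Fin n))) [IsFiniteMeasure P] [IsFiniteMeasure Q] :
    ∫ z, f z ∂P - ∫ z, f z ∂Q ≤ dBL P Q :=
  le_ciSup (bddAbove_range_sub_integral_oneLipb P Q) ⟨f, hf⟩

theorem dBL_nonneg (P Q : Measure (EuclideanSpace ℝ (Fin n))) [IsFiniteMeasure P]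
    [IsFiniteMeasure Q] : 0 ≤ dBL P Q := by
  simpa using sub_integral_le_dBL (f := 0) ⟨continuous_const, by simp, by simp⟩ P Q

theorem dBL_le_mass_add_mass (P Q : Measure (EuclideanSpace ℝ (Fin n))) [IsFiniteMeasure P]
    [IsFiniteMeasure Q] : dBL P Q ≤ P.real univ + Q.real univ :=
  ciSup_le fun f => sub_integral_le_mass_add_mass_of_mem_oneLipb f.2 P Q

theorem exists_seq_oneLipb_dBL_eq_iSup :
    ∃ d : ℕ → oneLipb n, ∀ (P Q : Measure (EuclideanSpace ℝ (Fin n))) [IsFiniteMeasure P]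
      [IsFiniteMeasure Q], dBL P Q = ⨆ k, (∫ z, (d k).1 z ∂P - ∫ z, (d k).1 z ∂Q) := by
  obtain ⟨d, hd⟩ := Equicontinuous.exists_seq_forall_exists_subseq_tendsto
    (LipschitzWith.uniformEquicontinuous _ 1 fun f : oneLipb n =>
      lipschitzWith_one_of_mem_oneLipb f.2).equicontinuous
  refine ⟨d, fun P Q _ _ => le_antisymm (ciSup_le fun f => ?_) ?_⟩
  · obtain ⟨φ, hφ⟩ := hd f.1 f.2
    have tendsto_integral (ν : Measure (EuclideanSpace ℝ (Fin n))) [IsFiniteMeasure ν] :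
        Tendsto (fun k => ∫ z, (d (φ k)).1 z ∂ν) atTop (𝓝 (∫ z, f.1 z ∂ν)) :=
      tendsto_integral_of_dominated_convergence (fun _ => 1)
        (fun k => (d (φ k)).2.1.aestronglyMeasurable) (integrable_const 1)
        (fun k => ae_of_all _ (norm_le_one_of_mem_oneLipb (d (φ k)).2)) (ae_of_all _ hφ)
    exact le_of_tendsto ((tendsto_integral P).sub (tendsto_integral Q)) (Eventually.of_forall
      fun k => le_ciSup ((bddAbove_range_sub_integral_oneLipb P Q).mono
        (range_comp_subset_range _ _)) (φ k))
  · exact ciSup_le fun k => sub_integral_le_dBL (d k).2 P Q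

theorem measurable_dBL {α : Type*} [MeasurableSpace α]
    (κ η : Kernel α (EuclideanSpace ℝ (Fin n))) [IsFiniteKernel κ] [IsFiniteKernel η] :
    Measurable fun a => dBL (κ a) (η a) := by
  obtain ⟨d, hd⟩ := exists_seq_oneLipb_dBL_eq_iSup (n := n)
  simp_rw [hd]
  exact .iSup fun k => ((d k).2.1.stronglyMeasurable.integral_kernel).measurable.sub
    ((d k).2.1.stronglyMeasurable.integral_kernel).measurable

end BoundedLipschitz

/-- Let `g, h : [0,1]² → [0,∞)` be Borel and let `(μ y)`, `(μ' y)` be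
measurable families of Borel probability measures on `ℝⁿ`. Then `y ↦ d_BL(μ^y, μ'^y)` is
measurable and, for every `x ∈ [0,1]` with `∫₀¹ g x y dy < ∞` and `∫₀¹ h x y dy < ∞`, the
graphon mixtures satisfy
`d_BL(ν^{g,μ,x}, ν^{h,μ',x}) ≤ ∫₀¹ |g x y − h x y| dy + ∫₀¹ h x y · d_BL(μ^y, μ'^y) dy`. -/
theorem dBL_graphon_mixture_stability (n : ℕ)
    (g h : ℝ → ℝ → ℝ)
    (hg_meas : Measurable (Function.uncurry g))
    (hh_meas : Measurable (Function.uncurry h))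
    (hg_nonneg : ∀ x y, 0 ≤ g x y)
    (hh_nonneg : ∀ x y, 0 ≤ h x y)
    (μ μ' : ℝ → ProbabilityMeasure (EuclideanSpace ℝ (Fin n)))
    (hμ : @Measurable ℝ (ProbabilityMeasure (EuclideanSpace ℝ (Fin n))) _
      (borel (ProbabilityMeasure (EuclideanSpace ℝ (Fin n)))) μ)
    (hμ' : @Measurable ℝ (ProbabilityMeasure (EuclideanSpace ℝ (Fin n))) _
      (borel (ProbabilityMeasure (EuclideanSpace ℝ (Fin n)))) μ') :
    Measurable (fun y => dBL (μ y : Measure (EuclideanSpace ℝ (Fin n)))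
      (μ' y : Measure (EuclideanSpace ℝ (Fin n)))) ∧
    ∀ x ∈ Set.Icc (0 : ℝ) 1,
      IntegrableOn (fun y => g x y) (Set.Icc 0 1) →
      IntegrableOn (fun y => h x y) (Set.Icc 0 1) →
      ∀ (νg νh : Measure (EuclideanSpace ℝ (Fin n))),
        IsFiniteMeasure νg → IsFiniteMeasure νh →
        (∀ A : Set (EuclideanSpace ℝ (Fin n)), MeasurableSet A →
          νg A = ∫⁻ y in Set.Icc (0 : ℝ) 1, ENNReal.ofReal (g x y) *
            (μ y : Measure (EuclideanSpace ℝ (Fin n))) A) →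
        (∀ A : Set (EuclideanSpace ℝ (Fin n)), MeasurableSet A →
          νh A = ∫⁻ y in Set.Icc (0 : ℝ) 1, ENNReal.ofReal (h x y) *
            (μ' y : Measure (EuclideanSpace ℝ (Fin n))) A) →
        dBL νg νh ≤
          (∫ y in Set.Icc (0 : ℝ) 1, |g x y - h x y|) +
            ∫ y in Set.Icc (0 : ℝ) 1, h x y *
              dBL (μ y : Measure (EuclideanSpace ℝ (Fin n)))
                (μ' y : Measure (EuclideanSpace ℝ (Fin n))) := by
  let κ := Kernel.ofProbabilityMeasure
    (hμ.mono le_rfl ProbabilityMeasure.measurableSpace_le_borel)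
  let κ' := Kernel.ofProbabilityMeasure
    (hμ'.mono le_rfl ProbabilityMeasure.measurableSpace_le_borel)
  have hdBL : Measurable fun y => dBL (κ y) (κ' y) := measurable_dBL κ κ'
  refine ⟨hdBL, fun x _ hgx hhx νg νh _ _ hνg hνh => ciSup_le fun f => ?_⟩
  have hdBL_le_two (y : ℝ) : ‖dBL (κ y) (κ' y)‖ ≤ 2 := by
    rw [Real.norm_of_nonneg (dBL_nonneg _ _)]
    simpa [one_add_one_eq_two] using dBL_le_mass_add_mass (κ y) (κ' y)
  have hmeas_integral (η : Kernel ℝ (EuclideanSpace ℝ (Fin n))) :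
      Measurable fun y => ∫ z, f.1 z ∂η y :=
    f.2.1.stronglyMeasurable.integral_kernel.measurable
  rw [integral_mixture (G := g x) (κ := κ) (hg_meas.comp measurable_prodMk_left) (hg_nonneg x)
      hνg (integrable_of_mem_oneLipb f.2 νg),
    integral_mixture (G := h x) (κ := κ') (hh_meas.comp measurable_prodMk_left) (hh_nonneg x)
      hνh (integrable_of_mem_oneLipb f.2 νh)]
  simp only [smul_eq_mul]
  exact integral_mul_sub_integral_mul_le hgx hhx (hh_nonneg x)
    (hmeas_integral κ).aestronglyMeasurable (hmeas_integral κ').aestronglyMeasurable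
    (fun y => by simpa using abs_integral_le_of_mem_oneLipb f.2 (κ y))
    (fun y => by simpa using abs_integral_le_of_mem_oneLipb f.2 (κ' y))
    (hhx.mul_bdd hdBL.aestronglyMeasurable (ae_of_all _ hdBL_le_two))
    fun y => sub_integral_le_dBL f.2 _ _
end

section
/- There exists a constant C depending only on the dimension n such that the following holds: for every ε ∈ (0,1], every N ∈ ℕ, and every family X₁, …, X_N of independent ℝⁿ-valued random variables with E[|X_j|^{n+1}] < ∞ for all j, one has E[ ∫_{ℝⁿ} (1 + |z|^{n+1}) ( (1/N) Σ_{j=1}^N ( φ_ε(z − X_j) − E[φ_ε(z − X_j)] ) )² dz ] ≤ C ε^{−n} (1 + (1/N) Σ_{j=1}^N E[|X_j|^{n+1}]) / N. -/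
/-!
Swap the expectation and the `z`-integral. For fixed `z` the summands `φ_ε(z - X_j)` are
independent and bounded, so the second moment of their centred average is the variance of an
independent sum, at most `N⁻² Σ_j E[φ_ε(z - X_j)²]`. Swapping back, it remains to bound
`∫ (1 + |z|^{n+1}) φ_ε(z - x)² dz` for a fixed point `x`: one factor `φ_ε(z - x)` integrates
to `1`, and the weighted other factor is at most `C ε^{-n} (1 + |x|^{n+1})`, because
`|z|^{n+1} ≤ 2^n (|z - x|^{n+1} + |x|^{n+1})` and `t^k e^{-t²/2ε²} ≤ k! e ε^k`.
-/

open MeasureTheory ProbabilityTheory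

/-- The density of the centered Gaussian measure `𝒩(0, ε² Idₙ)` on `ℝⁿ`. -/
noncomputable def gaussDensity (n : ℕ) (ε : ℝ) (x : EuclideanSpace ℝ (Fin n)) : ℝ :=
  (2 * Real.pi * ε ^ 2) ^ (-(n : ℝ) / 2) * Real.exp (-‖x‖ ^ 2 / (2 * ε ^ 2))

section GaussDensity

variable {n : ℕ} {ε : ℝ}

lemma gaussDensity_nonneg (x : EuclideanSpace ℝ (Fin n)) : 0 ≤ gaussDensity n ε x := by
  unfold gaussDensity
  positivity

@[fun_prop]
lemma continuous_gaussDensity : Continuous (gaussDensity n ε) := by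
  unfold gaussDensity
  fun_prop

@[fun_prop]
lemma measurable_gaussDensity : Measurable (gaussDensity n ε) :=
  continuous_gaussDensity.measurable

lemma integral_gaussDensity (hε : ε ≠ 0) : ∫ x, gaussDensity n ε x = 1 := by
  have hs : 0 < 2 * Real.pi * ε ^ 2 := by positivity
  have hform : gaussDensity n ε = fun x =>
      (2 * Real.pi * ε ^ 2) ^ (-(n : ℝ) / 2) * Real.exp (-(2 * ε ^ 2)⁻¹ * ‖x‖ ^ 2) := by
    ext x
    simp only [gaussDensity]
    ring_nf
  rw [hform, integral_const_mul, GaussianFourier.integral_rexp_neg_mul_sq_norm (by positivity),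
    finrank_euclideanSpace_fin, div_inv_eq_mul, ← mul_assoc, mul_comm Real.pi 2,
    ← Real.rpow_add hs, neg_div, neg_add_cancel, Real.rpow_zero]

lemma lintegral_gaussDensity (hε : ε ≠ 0) :
    ∫⁻ x, ENNReal.ofReal (gaussDensity n ε x) = 1 := by
  rw [← ofReal_integral_eq_lintegral_ofReal
    (integrable_of_integral_eq_one (integral_gaussDensity hε))
    (.of_forall gaussDensity_nonneg), integral_gaussDensity hε, ENNReal.ofReal_one]

lemma rpow_two_pi_mul_sq_neg_le (hε : 0 < ε) :
    (2 * Real.pi * ε ^ 2) ^ (-(n : ℝ) / 2) ≤ (ε ^ n)⁻¹ := by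
  have hεpow : (ε ^ 2) ^ (-(n : ℝ) / 2) = (ε ^ n)⁻¹ := by
    rw [← Real.rpow_natCast ε 2, ← Real.rpow_mul hε.le, ← Real.rpow_natCast ε n,
      ← Real.rpow_neg hε.le]
    ring_nf
  rw [Real.mul_rpow (by positivity) (by positivity), hεpow]
  refine mul_le_of_le_one_left (by positivity) (Real.rpow_le_one_of_one_le_of_nonpos ?_ ?_)
  · linarith [Real.pi_gt_three]
  · have := n.cast_nonneg (α := ℝ)
    linarith

lemma gaussDensity_le (hε : 0 < ε) (x : EuclideanSpace ℝ (Fin n)) :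
    gaussDensity n ε x ≤ (ε ^ n)⁻¹ := by
  refine le_trans ?_ (rpow_two_pi_mul_sq_neg_le hε)
  refine mul_le_of_le_one_right (by positivity) (Real.exp_le_one_iff.2 ?_)
  exact div_nonpos_of_nonpos_of_nonneg (by simp) (by positivity)

lemma pow_mul_exp_neg_sq_div_le (k : ℕ) (hε : 0 < ε) {t : ℝ} (ht : 0 ≤ t) :
    t ^ k * Real.exp (-t ^ 2 / (2 * ε ^ 2)) ≤ k.factorial * Real.exp 1 * ε ^ k := by
  set s := t / ε
  have hts : t = ε * s := (mul_div_cancel₀ t hε.ne').symm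
  have hpow : s ^ k ≤ k.factorial * Real.exp s := by
    have := Real.pow_div_factorial_le_exp (x := s) (div_nonneg ht hε.le) k
    rwa [div_le_iff₀ (by positivity), mul_comm] at this
  have hexp : Real.exp s * Real.exp (-t ^ 2 / (2 * ε ^ 2)) ≤ Real.exp 1 := by
    rw [← Real.exp_add, Real.exp_le_exp, hts]
    field_simp
    nlinarith [sq_nonneg (s - 1)]
  calc t ^ k * Real.exp (-t ^ 2 / (2 * ε ^ 2))
      = ε ^ k * s ^ k * Real.exp (-t ^ 2 / (2 * ε ^ 2)) := by rw [← mul_pow, ← hts]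
    _ ≤ ε ^ k * (k.factorial * Real.exp s) * Real.exp (-t ^ 2 / (2 * ε ^ 2)) := by gcongr
    _ = ε ^ k * k.factorial * (Real.exp s * Real.exp (-t ^ 2 / (2 * ε ^ 2))) := by ring
    _ ≤ ε ^ k * k.factorial * Real.exp 1 := by gcongr
    _ = k.factorial * Real.exp 1 * ε ^ k := by ring

lemma norm_pow_mul_gaussDensity_le (k : ℕ) (hε : 0 < ε) (x : EuclideanSpace ℝ (Fin n)) :
    ‖x‖ ^ k * gaussDensity n ε x ≤ k.factorial * Real.exp 1 * ε ^ k / ε ^ n := by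
  calc ‖x‖ ^ k * gaussDensity n ε x
      = (2 * Real.pi * ε ^ 2) ^ (-(n : ℝ) / 2) * (‖x‖ ^ k * Real.exp (-‖x‖ ^ 2 / (2 * ε ^ 2))) := by
        rw [gaussDensity, mul_left_comm]
    _ ≤ (ε ^ n)⁻¹ * (k.factorial * Real.exp 1 * ε ^ k) := by
        gcongr ?_ * ?_
        · exact rpow_two_pi_mul_sq_neg_le hε
        · exact pow_mul_exp_neg_sq_div_le k hε (norm_nonneg x)
    _ = k.factorial * Real.exp 1 * ε ^ k / ε ^ n := by ring

lemma memLp_gaussDensity_sub_comp {Ω : Type*} [MeasurableSpace Ω] {P : Measure Ω}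
    [IsFiniteMeasure P] (hε : 0 < ε) (z : EuclideanSpace ℝ (Fin n))
    {X : Ω → EuclideanSpace ℝ (Fin n)} (hX : Measurable X) (p : ENNReal) :
    MemLp (fun ω => gaussDensity n ε (z - X ω)) p P :=
  memLp_of_bounded (.of_forall fun _ => ⟨gaussDensity_nonneg _, gaussDensity_le hε _⟩)
    (by fun_prop) p

end GaussDensity

noncomputable def gaussMomentConst (n : ℕ) : ℝ := 2 ^ n * ((n + 1).factorial * Real.exp 1 + 1)

lemma gaussMomentConst_pos (n : ℕ) : 0 < gaussMomentConst n := by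
  unfold gaussMomentConst
  positivity

lemma one_add_norm_pow_mul_gaussDensity_sub_le {n : ℕ} {ε : ℝ} (hε : 0 < ε) (hε1 : ε ≤ 1)
    (x z : EuclideanSpace ℝ (Fin n)) :
    (1 + ‖z‖ ^ (n + 1)) * gaussDensity n ε (z - x) ≤
      gaussMomentConst n / ε ^ n * (1 + ‖x‖ ^ (n + 1)) := by
  set g := gaussDensity n ε (z - x)
  set K : ℝ := (n + 1).factorial * Real.exp 1
  have hg : g ≤ (ε ^ n)⁻¹ := gaussDensity_le hε _
  have hyg : ‖z - x‖ ^ (n + 1) * g ≤ K * (ε ^ n)⁻¹ := by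
    refine (norm_pow_mul_gaussDensity_le (n + 1) hε _).trans ?_
    rw [div_eq_mul_inv]
    gcongr
    exact mul_le_of_le_one_right (by positivity) (pow_le_one₀ hε.le hε1)
  have hz : ‖z‖ ^ (n + 1) ≤ 2 ^ n * (‖z - x‖ ^ (n + 1) + ‖x‖ ^ (n + 1)) :=
    (pow_le_pow_left₀ (norm_nonneg z) (norm_le_norm_sub_add z x) _).trans
      (add_pow_le (norm_nonneg _) (norm_nonneg _) (n + 1))
  have h2n : (1 : ℝ) ≤ 2 ^ n := one_le_pow₀ one_le_two
  have hK : 0 ≤ K := by positivity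
  calc (1 + ‖z‖ ^ (n + 1)) * g
      ≤ g + 2 ^ n * (‖z - x‖ ^ (n + 1) * g + ‖x‖ ^ (n + 1) * g) := by
        nlinarith [gaussDensity_nonneg (n := n) (ε := ε) (z - x)]
    _ ≤ (ε ^ n)⁻¹ + 2 ^ n * (K * (ε ^ n)⁻¹ + ‖x‖ ^ (n + 1) * (ε ^ n)⁻¹) := by gcongr
    _ ≤ gaussMomentConst n / ε ^ n * (1 + ‖x‖ ^ (n + 1)) := by
        rw [gaussMomentConst, div_eq_mul_inv]
        have : 0 ≤ (ε ^ n)⁻¹ := by positivity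
        nlinarith [mul_nonneg (mul_nonneg hK this) (pow_nonneg (norm_nonneg x) (n + 1))]

lemma lintegral_one_add_norm_pow_mul_gaussDensity_sub_sq_le {n : ℕ} {ε : ℝ} (hε : 0 < ε)
    (hε1 : ε ≤ 1) (x : EuclideanSpace ℝ (Fin n)) :
    ∫⁻ z, ENNReal.ofReal ((1 + ‖z‖ ^ (n + 1)) * gaussDensity n ε (z - x) ^ 2) ≤
      ENNReal.ofReal (gaussMomentConst n / ε ^ n * (1 + ‖x‖ ^ (n + 1))) := by
  set M := gaussMomentConst n / ε ^ n * (1 + ‖x‖ ^ (n + 1))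
  have hM : 0 ≤ M := by have := gaussMomentConst_pos n; positivity
  calc ∫⁻ z, ENNReal.ofReal ((1 + ‖z‖ ^ (n + 1)) * gaussDensity n ε (z - x) ^ 2)
      ≤ ∫⁻ z, ENNReal.ofReal M * ENNReal.ofReal (gaussDensity n ε (z - x)) := by
        refine lintegral_mono fun z => ?_
        rw [← ENNReal.ofReal_mul hM, sq, ← mul_assoc]
        exact ENNReal.ofReal_le_ofReal (mul_le_mul_of_nonneg_right
          (one_add_norm_pow_mul_gaussDensity_sub_le hε hε1 x z) (gaussDensity_nonneg _))
    _ = ENNReal.ofReal M := by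
        rw [lintegral_const_mul' _ _ ENNReal.ofReal_ne_top,
          lintegral_sub_right_eq_self (fun y => ENNReal.ofReal (gaussDensity n ε y)) x,
          lintegral_gaussDensity hε.ne', mul_one]

section Variance

variable {Ω ι : Type*} [MeasurableSpace Ω] {P : Measure Ω} [IsProbabilityMeasure P] [Fintype ι]
  {Y : ι → Ω → ℝ}

lemma integral_sq_sum_sub_integral_le (hY : ∀ i, MemLp (Y i) 2 P)
    (hind : Pairwise fun i j => IndepFun (Y i) (Y j) P) :
    ∫ ω, (∑ i, (Y i ω - ∫ ω', Y i ω' ∂P)) ^ 2 ∂P ≤ ∑ i, ∫ ω, Y i ω ^ 2 ∂P := by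
  have hsum : ∀ ω, ∑ i, (Y i ω - ∫ ω', Y i ω' ∂P) = (∑ i, Y i) ω - P[∑ i, Y i] := fun ω => by
    simp only [Finset.sum_apply]
    rw [integral_finsetSum _ fun i _ => (hY i).integrable one_le_two, Finset.sum_sub_distrib]
  calc ∫ ω, (∑ i, (Y i ω - ∫ ω', Y i ω' ∂P)) ^ 2 ∂P
      = variance (∑ i, Y i) P := by
        simp_rw [hsum]
        exact (variance_eq_integral (memLp_finsetSum' _ fun i _ => hY i).aemeasurable).symm
    _ = ∑ i, variance (Y i) P :=
        IndepFun.variance_sum (fun i _ => hY i) fun i _ j _ hij => hind hij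
    _ ≤ ∑ i, ∫ ω, Y i ω ^ 2 ∂P :=
        Finset.sum_le_sum fun i _ => variance_le_expectation_sq (hY i).aestronglyMeasurable

lemma lintegral_ofReal_mul_sq_mul_sum_sub_integral_le (hY : ∀ i, MemLp (Y i) 2 P)
    (hind : Pairwise fun i j => IndepFun (Y i) (Y j) P) {c : ℝ} (hc : 0 ≤ c) (a : ℝ) :
    ∫⁻ ω, ENNReal.ofReal (c * (a * ∑ i, (Y i ω - ∫ ω', Y i ω' ∂P)) ^ 2) ∂P ≤
      ENNReal.ofReal (a ^ 2) * ∑ i, ENNReal.ofReal (c * ∫ ω, Y i ω ^ 2 ∂P) := by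
  have hS : MemLp (fun ω => ∑ i, (Y i ω - ∫ ω', Y i ω' ∂P)) 2 P :=
    memLp_finsetSum _ fun i _ => (hY i).sub (memLp_const (∫ ω', Y i ω' ∂P))
  have hint : Integrable (fun ω => c * (a * ∑ i, (Y i ω - ∫ ω', Y i ω' ∂P)) ^ 2) P := by
    simpa only [mul_pow, ← mul_assoc] using hS.integrable_sq.const_mul (c * a ^ 2)
  rw [← ofReal_integral_eq_lintegral_ofReal hint (.of_forall fun ω => by positivity),
    ← ENNReal.ofReal_sum_of_nonneg fun i _ => mul_nonneg hc (integral_nonneg fun ω => sq_nonneg _),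
    ← ENNReal.ofReal_mul (sq_nonneg a)]
  refine ENNReal.ofReal_le_ofReal ?_
  simp_rw [mul_pow, ← mul_assoc]
  rw [integral_const_mul, ← Finset.mul_sum, mul_comm c, mul_assoc]
  gcongr
  exact integral_sq_sum_sub_integral_le hY hind

end Variance

lemma measurable_integral_comp_sub {E Ω : Type*} [MeasurableSpace E] [Sub E] [MeasurableSub₂ E]
    [MeasurableSpace Ω] {P : Measure Ω} [SFinite P] {f : E → ℝ} (hf : Measurable f)
    {X : Ω → E} (hX : Measurable X) :
    Measurable fun z => ∫ ω, f (z - X ω) ∂P :=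
  (hf.comp (measurable_fst.sub (hX.comp measurable_snd))).stronglyMeasurable
    |>.integral_prod_right'.measurable

lemma measurable_sum_comp_sub_sub_integral {E Ω ι : Type*} [MeasurableSpace E] [Sub E]
    [MeasurableSub₂ E] [MeasurableSpace Ω] {P : Measure Ω} [SFinite P] [Fintype ι] {f : E → ℝ}
    (hf : Measurable f) {X : ι → Ω → E} (hX : ∀ j, Measurable (X j)) :
    Measurable fun p : Ω × E => ∑ j, (f (p.2 - X j p.1) - ∫ ω', f (p.2 - X j ω') ∂P) :=
  Finset.measurable_sum _ fun j _ =>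
    (hf.comp (measurable_snd.sub ((hX j).comp measurable_fst))).sub
      ((measurable_integral_comp_sub hf (hX j)).comp measurable_snd)

lemma lintegral_one_add_norm_pow_mul_integral_gaussDensity_sq_le {Ω : Type*} [MeasurableSpace Ω]
    {P : Measure Ω} [IsProbabilityMeasure P] {n : ℕ} {ε : ℝ} (hε : 0 < ε) (hε1 : ε ≤ 1)
    {X : Ω → EuclideanSpace ℝ (Fin n)} (hX : Measurable X)
    (hXint : Integrable (fun ω => ‖X ω‖ ^ (n + 1)) P) :
    ∫⁻ z, ENNReal.ofReal ((1 + ‖z‖ ^ (n + 1)) * ∫ ω, gaussDensity n ε (z - X ω) ^ 2 ∂P) ≤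
      ENNReal.ofReal (gaussMomentConst n / ε ^ n * (1 + ∫ ω, ‖X ω‖ ^ (n + 1) ∂P)) := by
  have hC : 0 ≤ gaussMomentConst n / ε ^ n := div_nonneg (gaussMomentConst_pos n).le (by positivity)
  have hint : ∀ z, Integrable (fun ω => (1 + ‖z‖ ^ (n + 1)) * gaussDensity n ε (z - X ω) ^ 2) P :=
    fun z => (Integrable.of_bound (by fun_prop) ((ε ^ n)⁻¹ ^ 2) (.of_forall fun ω => by
      rw [Real.norm_of_nonneg (sq_nonneg _)]
      exact pow_le_pow_left₀ (gaussDensity_nonneg _) (gaussDensity_le hε _) 2)).const_mul _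
  calc ∫⁻ z, ENNReal.ofReal ((1 + ‖z‖ ^ (n + 1)) * ∫ ω, gaussDensity n ε (z - X ω) ^ 2 ∂P)
      = ∫⁻ z, ∫⁻ ω, ENNReal.ofReal ((1 + ‖z‖ ^ (n + 1)) * gaussDensity n ε (z - X ω) ^ 2) ∂P :=
        lintegral_congr fun z => by
          rw [← integral_const_mul, ofReal_integral_eq_lintegral_ofReal (hint z)
            (.of_forall fun ω => by positivity)]
    _ = ∫⁻ ω, (∫⁻ z, ENNReal.ofReal ((1 + ‖z‖ ^ (n + 1)) * gaussDensity n ε (z - X ω) ^ 2)) ∂P :=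
        lintegral_lintegral_swap (by fun_prop)
    _ ≤ ∫⁻ ω, ENNReal.ofReal (gaussMomentConst n / ε ^ n * (1 + ‖X ω‖ ^ (n + 1))) ∂P :=
        lintegral_mono fun ω => lintegral_one_add_norm_pow_mul_gaussDensity_sub_sq_le hε hε1 (X ω)
    _ = ENNReal.ofReal (gaussMomentConst n / ε ^ n * (1 + ∫ ω, ‖X ω‖ ^ (n + 1) ∂P)) := by
        have hmoment : Integrable
            (fun ω => gaussMomentConst n / ε ^ n * (1 + ‖X ω‖ ^ (n + 1))) P :=
          ((integrable_const 1).add hXint).const_mul _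
        rw [← ofReal_integral_eq_lintegral_ofReal hmoment
            (.of_forall fun ω => mul_nonneg hC (by positivity)),
          integral_const_mul,
          integral_add (integrable_const 1) hXint, integral_const, probReal_univ, one_smul]

lemma ofReal_inv_sq_mul_sum_ofReal_mul_one_add {N : ℕ} {a : ℝ} (ha : 0 ≤ a) {m : Fin N → ℝ}
    (hm : ∀ j, 0 ≤ m j) :
    ENNReal.ofReal ((N : ℝ)⁻¹ ^ 2) * ∑ j, ENNReal.ofReal (a * (1 + m j)) =
      ENNReal.ofReal (a * (1 + (N : ℝ)⁻¹ * ∑ j, m j) / N) := by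
  rcases N.eq_zero_or_pos with rfl | hN
  · simp
  rw [← ENNReal.ofReal_sum_of_nonneg fun j _ => mul_nonneg ha (by linarith [hm j]),
    ← ENNReal.ofReal_mul (by positivity), ← Finset.mul_sum, Finset.sum_add_distrib]
  congr 1
  field_simp
  simp

/-- There is a constant `C = C(n)` such that for every `ε ∈ (0,1]`, every
`N`, and all independent `ℝⁿ`-valued random variables `X₁, …, X_N` with finite `(n+1)`-th
moments,
`E[∫ (1 + |z|^{n+1}) ((1/N) Σ_j (φ_ε(z − X_j) − E φ_ε(z − X_j)))² dz]
  ≤ C ε^{−n} (1 + (1/N) Σ_j E[|X_j|^{n+1}]) / N`. -/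
theorem empirical_gaussian_density_fluctuation_bound (n : ℕ) :
    ∃ C : ℝ, 0 < C ∧
      ∀ (ε : ℝ), ε ∈ Set.Ioc (0 : ℝ) 1 →
      ∀ (N : ℕ) (Ω : Type) [MeasurableSpace Ω] (P : Measure Ω) [IsProbabilityMeasure P]
        (X : Fin N → Ω → EuclideanSpace ℝ (Fin n)),
        (∀ j, Measurable (X j)) →
        (∀ j, Integrable (fun ω => ‖X j ω‖ ^ (n + 1)) P) →
        iIndepFun X P →
        (∫⁻ ω, (∫⁻ z, ENNReal.ofReal ((1 + ‖z‖ ^ (n + 1)) *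
            ((N : ℝ)⁻¹ * ∑ j, (gaussDensity n ε (z - X j ω) -
              ∫ ω', gaussDensity n ε (z - X j ω') ∂P)) ^ 2)) ∂P) ≤
          ENNReal.ofReal
            (C / ε ^ n * (1 + (N : ℝ)⁻¹ * ∑ j, ∫ ω, ‖X j ω‖ ^ (n + 1) ∂P) / N) := by
  refine ⟨gaussMomentConst n, gaussMomentConst_pos n, ?_⟩
  rintro ε ⟨hε, hε1⟩ N Ω _ P _ X hX hXint hXind
  have hind : ∀ z, Pairwise fun i j => IndepFun (fun ω => gaussDensity n ε (z - X i ω))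
      (fun ω => gaussDensity n ε (z - X j ω)) P := fun z i j hij =>
    have hφ : Measurable fun x => gaussDensity n ε (z - x) := by fun_prop
    (hXind.indepFun hij).comp hφ hφ
  have hfluct := measurable_sum_comp_sub_sub_integral (P := P) (measurable_gaussDensity (ε := ε)) hX
  have hsecond : ∀ j, Measurable fun z => ∫ ω, gaussDensity n ε (z - X j ω) ^ 2 ∂P := fun j =>
    measurable_integral_comp_sub (measurable_gaussDensity.pow_const 2) (hX j)
  rw [lintegral_lintegral_swap (by fun_prop)]
  calc _ ≤ ∫⁻ z, ENNReal.ofReal ((N : ℝ)⁻¹ ^ 2) * ∑ j, ENNReal.ofReal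
          ((1 + ‖z‖ ^ (n + 1)) * ∫ ω, gaussDensity n ε (z - X j ω) ^ 2 ∂P) :=
        lintegral_mono fun z =>
          lintegral_ofReal_mul_sq_mul_sum_sub_integral_le
            (fun j => memLp_gaussDensity_sub_comp hε z (hX j) 2) (hind z) (by positivity) _
    _ = ENNReal.ofReal ((N : ℝ)⁻¹ ^ 2) * ∑ j, ∫⁻ z, ENNReal.ofReal
          ((1 + ‖z‖ ^ (n + 1)) * ∫ ω, gaussDensity n ε (z - X j ω) ^ 2 ∂P) := by
        rw [lintegral_const_mul' _ _ ENNReal.ofReal_ne_top,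
          lintegral_finsetSum' _ fun j _ => by fun_prop]
    _ ≤ ENNReal.ofReal ((N : ℝ)⁻¹ ^ 2) * ∑ j, ENNReal.ofReal
          (gaussMomentConst n / ε ^ n * (1 + ∫ ω, ‖X j ω‖ ^ (n + 1) ∂P)) := by
        gcongr with j
        exact lintegral_one_add_norm_pow_mul_integral_gaussDensity_sq_le hε hε1 (hX j) (hXint j)
    _ = _ := ofReal_inv_sq_mul_sum_ofReal_mul_one_add
        (div_nonneg (gaussMomentConst_pos n).le (by positivity))
        fun j => integral_nonneg fun ω => by positivity
end

section
/- Let c > 0, M > 0, β ∈ (0,1] and N ∈ ℕ. Let (ζ_{ij})_{1≤i,j≤N} be mutually independent random variables with ζ_{ij} ~ Bernoulli(q_{ij}) and q_{ij} ≤ cβ for all i, j, and let b₁, …, b_N be nonnegative random variables on the same probability space with E[b_j⁴] ≤ M for all j. Set Γ_{ij} = ζ_{ij} − q_{ij}. Then there exists a constant C depending only on c and M such that (1/N) Σ_{i=1}^N E[ ( (1/(Nβ)) Σ_{j=1}^N Γ_{ij} b_j )² ] ≤ C ( (Nβ)^{−3/2} + (Nβ)^{−1} + (N β²)^{−1/2}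 ). -/
/-!
Write `S j k = ∑ i, Γ (i, j) * Γ (i, k)` for the Gram matrix of the columns of `Γ`. Expanding the
square, `∑ i, E[(∑ j, Γ (i, j) * b j)²] = ∑ j, ∑ k, E[S j k * b j * b k]`, and Cauchy–Schwarz
bounds each term by `√E[(S j k)²] * √M`; this is what makes any dependence between `Γ` and the
weights harmless. In `E[(S j k)²] = ∑ i, ∑ l, E[Γ (i, j) Γ (i, k) Γ (l, j) Γ (l, k)]` independence
and centring leave only `N` terms of size `≤ (cβ)²` when `j ≠ k`, and `N` terms `≤ cβ` plus `N²`
terms `≤ (cβ)²` when `j = k`. Summing the `N` diagonal and `N²` off-diagonal pairs and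
normalising gives the three terms of the bound.
-/

open MeasureTheory ProbabilityTheory Finset

theorem integral_mul_le_sqrt_mul_sqrt {Ω : Type*} [MeasurableSpace Ω] {P : Measure Ω}
    {f g : Ω → ℝ} (hf : MemLp f 2 P) (hg : MemLp g 2 P) :
    ∫ ω, f ω * g ω ∂P ≤ √(∫ ω, f ω ^ 2 ∂P) * √(∫ ω, g ω ^ 2 ∂P) := by
  have h2 : (2 : ENNReal) = ENNReal.ofReal 2 := by norm_num
  have holder := integral_mul_norm_le_Lp_mul_Lq Real.HolderConjugate.two_two
    (h2 ▸ hf) (h2 ▸ hg)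
  simp only [Real.rpow_two, Real.norm_eq_abs, sq_abs, ← Real.sqrt_eq_rpow] at holder
  calc ∫ ω, f ω * g ω ∂P ≤ ‖∫ ω, f ω * g ω ∂P‖ := le_abs_self _
    _ ≤ ∫ ω, ‖f ω * g ω‖ ∂P := norm_integral_le_integral_norm _
    _ ≤ _ := by simpa only [norm_mul, Real.norm_eq_abs] using holder

def IsBernoulli {Ω : Type*} [MeasurableSpace Ω] (P : Measure Ω) (ζ : Ω → ℝ) (q : ℝ) : Prop :=
  Measure.map ζ P = ENNReal.ofReal q • Measure.dirac 1 + ENNReal.ofReal (1 - q) • Measure.dirac 0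

namespace IsBernoulli

variable {Ω : Type*} [MeasurableSpace Ω] {P : Measure Ω} {ζ : Ω → ℝ} {q : ℝ}

theorem integral_comp (h : IsBernoulli P ζ q) (hζ : Measurable ζ) (hq0 : 0 ≤ q) (hq1 : q ≤ 1)
    {g : ℝ → ℝ} (hg : Measurable g) :
    ∫ ω, g (ζ ω) ∂P = q * g 1 + (1 - q) * g 0 := by
  have hdirac (x : ℝ) : Integrable g (Measure.dirac x) :=
    ⟨hg.aestronglyMeasurable, by simp [HasFiniteIntegral, lintegral_dirac]⟩
  rw [← integral_map hζ.aemeasurable hg.aestronglyMeasurable, h,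
    integral_add_measure ((hdirac 1).smul_measure ENNReal.ofReal_ne_top)
      ((hdirac 0).smul_measure ENNReal.ofReal_ne_top),
    integral_smul_measure, integral_smul_measure, integral_dirac, integral_dirac,
    ENNReal.toReal_ofReal hq0, ENNReal.toReal_ofReal (sub_nonneg.2 hq1), smul_eq_mul, smul_eq_mul]

theorem ae_eq_zero_or_eq_one (h : IsBernoulli P ζ q) (hζ : Measurable ζ) :
    ∀ᵐ ω ∂P, ζ ω = 0 ∨ ζ ω = 1 := by
  have hnull : Measure.map ζ P {0, 1}ᶜ = 0 := by
    rw [h]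
    simp [Measure.dirac_apply']
  rw [Measure.map_apply hζ (by measurability)] at hnull
  filter_upwards [measure_eq_zero_iff_ae_notMem.1 hnull] with ω hω
  simpa [or_iff_not_imp_left] using hω

theorem integral_sub_eq_zero (h : IsBernoulli P ζ q) (hζ : Measurable ζ) (hq0 : 0 ≤ q)
    (hq1 : q ≤ 1) : ∫ ω, (ζ ω - q) ∂P = 0 := by
  rw [h.integral_comp hζ hq0 hq1 (g := fun x => x - q) (by fun_prop)]
  ring

theorem integral_sub_sq_le (h : IsBernoulli P ζ q) (hζ : Measurable ζ) (hq0 : 0 ≤ q)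
    (hq1 : q ≤ 1) : ∫ ω, (ζ ω - q) ^ 2 ∂P ≤ q := by
  rw [h.integral_comp hζ hq0 hq1 (g := fun x => (x - q) ^ 2) (by fun_prop)]
  nlinarith

theorem abs_sub_le_one_ae (h : IsBernoulli P ζ q) (hζ : Measurable ζ) (hq0 : 0 ≤ q)
    (hq1 : q ≤ 1) : ∀ᵐ ω ∂P, |ζ ω - q| ≤ 1 := by
  filter_upwards [h.ae_eq_zero_or_eq_one hζ] with ω hω
  rcases hω with hω | hω <;> rw [hω, abs_le] <;> constructor <;> linarith

end IsBernoulli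

section Moments

variable {Ω : Type*} [MeasurableSpace Ω] {P : Measure Ω} {f g : Ω → ℝ}

theorem integral_pow_four_le_integral_sq [IsFiniteMeasure P] (hf : Measurable f)
    (hbdd : ∀ᵐ ω ∂P, |f ω| ≤ 1) : ∫ ω, f ω ^ 4 ∂P ≤ ∫ ω, f ω ^ 2 ∂P := by
  have hint (n : ℕ) : Integrable (fun ω => f ω ^ n) P :=
    .of_bound (by fun_prop) 1 (by
      filter_upwards [hbdd] with ω h
      simpa [abs_pow] using pow_le_one₀ (abs_nonneg _) h)
  refine integral_mono_ae (hint 4) (hint 2) ?_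
  filter_upwards [hbdd] with ω h
  have hsq : f ω ^ 2 ≤ 1 := (sq_le_one_iff_abs_le_one _).2 h
  nlinarith [sq_nonneg (f ω)]

theorem integrable_mul_sq_of_integrable_pow_four (hf : AEStronglyMeasurable f P)
    (hg : AEStronglyMeasurable g P) (hf4 : Integrable (fun ω => f ω ^ 4) P)
    (hg4 : Integrable (fun ω => g ω ^ 4) P) : Integrable (fun ω => (f ω * g ω) ^ 2) P :=
  ((hf4.add hg4).div_const 2).mono' (by fun_prop) (ae_of_all _ fun ω => by
    rw [Real.norm_eq_abs, abs_of_nonneg (sq_nonneg _), Pi.add_apply]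
    nlinarith [sq_nonneg (f ω ^ 2 - g ω ^ 2)])

theorem integral_mul_sq_le_of_integral_pow_four_le (hf : AEStronglyMeasurable f P)
    (hg : AEStronglyMeasurable g P) (hf4 : Integrable (fun ω => f ω ^ 4) P)
    (hg4 : Integrable (fun ω => g ω ^ 4) P) {M : ℝ} (hfM : ∫ ω, f ω ^ 4 ∂P ≤ M)
    (hgM : ∫ ω, g ω ^ 4 ∂P ≤ M) : ∫ ω, (f ω * g ω) ^ 2 ∂P ≤ M := by
  have hle : ∫ ω, (f ω * g ω) ^ 2 ∂P ≤ ∫ ω, (f ω ^ 4 + g ω ^ 4) / 2 ∂P :=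
    integral_mono (integrable_mul_sq_of_integrable_pow_four hf hg hf4 hg4)
      ((hf4.add hg4).div_const 2) fun ω => by nlinarith [sq_nonneg (f ω ^ 2 - g ω ^ 2)]
  rw [integral_div, integral_add hf4 hg4] at hle
  linarith

end Moments

section IndependentArray

variable {Ω ι κ : Type*} [MeasurableSpace Ω] {P : Measure Ω}

theorem integral_comp_mul_comp_of_ne {X : ι → Ω → ℝ} (hX : ∀ i, Measurable (X i))
    (hind : iIndepFun X P) {i i' : ι} (hi : i ≠ i') {φ ψ : ℝ → ℝ} (hφ : Measurable φ)
    (hψ : Measurable ψ) :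
    ∫ ω, φ (X i ω) * ψ (X i' ω) ∂P = (∫ ω, φ (X i ω) ∂P) * ∫ ω, ψ (X i' ω) ∂P :=
  ((hind.indepFun hi).comp hφ hψ).integral_mul_eq_mul_integral
    (hφ.comp (hX i)).aestronglyMeasurable (hψ.comp (hX i')).aestronglyMeasurable

theorem integral_rowPair_mul_of_row_ne {Γ : ι × κ → Ω → ℝ} (hΓ : ∀ p, Measurable (Γ p))
    (hind : iIndepFun Γ P) {i l : ι} (hil : i ≠ l) (j k : κ) :
    ∫ ω, (Γ (i, j) ω * Γ (i, k) ω) * (Γ (l, j) ω * Γ (l, k) ω) ∂P =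
      (∫ ω, Γ (i, j) ω * Γ (i, k) ω ∂P) * ∫ ω, Γ (l, j) ω * Γ (l, k) ω ∂P := by
  have hrow {j' k' : κ} : (i, j') ≠ (l, k') := fun h => hil (congrArg Prod.fst h)
  have hmul : Measurable fun v : ℝ × ℝ => v.1 * v.2 := by fun_prop
  exact ((hind.indepFun_prodMk_prodMk hΓ _ _ _ _ hrow hrow hrow hrow).comp hmul hmul
    ).integral_mul_eq_mul_integral (by fun_prop) (by fun_prop)

variable {Γ : ι × κ → Ω → ℝ} {s : ℝ}

theorem integral_rowPair_mul_le_of_col_eq [IsFiniteMeasure P] [DecidableEq ι]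
    (hΓ : ∀ p, Measurable (Γ p)) (hind : iIndepFun Γ P) (hbdd : ∀ᵐ ω ∂P, ∀ p, |Γ p ω| ≤ 1)
    (hvar : ∀ p, ∫ ω, Γ p ω ^ 2 ∂P ≤ s) (i l : ι) (j : κ) :
    ∫ ω, (Γ (i, j) ω * Γ (i, j) ω) * (Γ (l, j) ω * Γ (l, j) ω) ∂P ≤
      (if i = l then s else 0) + s ^ 2 := by
  have hs : 0 ≤ s := (integral_nonneg fun ω => sq_nonneg (Γ (i, j) ω)).trans (hvar _)
  by_cases hil : i = l
  · subst hil
    have h4 := integral_pow_four_le_integral_sq (hΓ (i, j)) (hbdd.mono fun ω h => h (i, j))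
    calc ∫ ω, (Γ (i, j) ω * Γ (i, j) ω) * (Γ (i, j) ω * Γ (i, j) ω) ∂P
        = ∫ ω, Γ (i, j) ω ^ 4 ∂P := by congr 1; ext ω; ring
      _ ≤ s := h4.trans (hvar _)
      _ ≤ (if i = i then s else 0) + s ^ 2 := by rw [if_pos rfl]; nlinarith
  · rw [integral_rowPair_mul_of_row_ne hΓ hind hil, if_neg hil, zero_add]
    simpa only [sq] using
      mul_le_mul (hvar (i, j)) (hvar (l, j)) (integral_nonneg fun ω => sq_nonneg _) hs

theorem integral_rowPair_mul_le_of_col_ne [DecidableEq ι] (hΓ : ∀ p, Measurable (Γ p))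
    (hind : iIndepFun Γ P) (hmean : ∀ p, ∫ ω, Γ p ω ∂P = 0) (hvar : ∀ p, ∫ ω, Γ p ω ^ 2 ∂P ≤ s)
    (i l : ι) {j k : κ} (hjk : j ≠ k) :
    ∫ ω, (Γ (i, j) ω * Γ (i, k) ω) * (Γ (l, j) ω * Γ (l, k) ω) ∂P ≤
      if i = l then s ^ 2 else 0 := by
  have hcol {i' : ι} : (i', j) ≠ (i', k) := fun h => hjk (congrArg Prod.snd h)
  by_cases hil : i = l
  · subst hil
    have hs : 0 ≤ s := (integral_nonneg fun ω => sq_nonneg (Γ (i, j) ω)).trans (hvar _)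
    calc ∫ ω, (Γ (i, j) ω * Γ (i, k) ω) * (Γ (i, j) ω * Γ (i, k) ω) ∂P
        = ∫ ω, Γ (i, j) ω ^ 2 * Γ (i, k) ω ^ 2 ∂P := by congr 1; ext ω; ring
      _ = (∫ ω, Γ (i, j) ω ^ 2 ∂P) * ∫ ω, Γ (i, k) ω ^ 2 ∂P :=
        integral_comp_mul_comp_of_ne hΓ hind hcol (measurable_id.pow_const 2)
          (measurable_id.pow_const 2)
      _ ≤ if i = i then s ^ 2 else 0 := by
        rw [if_pos rfl, sq s]
        exact mul_le_mul (hvar _) (hvar _) (integral_nonneg fun ω => sq_nonneg _) hs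
  · rw [integral_rowPair_mul_of_row_ne hΓ hind hil, if_neg hil,
      integral_comp_mul_comp_of_ne hΓ hind hcol (φ := fun x => x) (ψ := fun x => x)
        measurable_id measurable_id, hmean, zero_mul, zero_mul]

end IndependentArray

section ColumnGram

variable {Ω ι κ : Type*} [Fintype ι]

def colGram (Γ : ι × κ → Ω → ℝ) (j k : κ) (ω : Ω) : ℝ := ∑ i, Γ (i, j) ω * Γ (i, k) ω

theorem abs_colGram_le {Γ : ι × κ → Ω → ℝ} {ω : Ω} (h : ∀ p, |Γ p ω| ≤ 1) (j k : κ) :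
    |colGram Γ j k ω| ≤ Fintype.card ι := by
  calc |colGram Γ j k ω| ≤ ∑ i, |Γ (i, j) ω * Γ (i, k) ω| := abs_sum_le_sum_abs _ _
    _ ≤ ∑ _i : ι, (1 : ℝ) := sum_le_sum fun i _ => by
        rw [abs_mul]; exact mul_le_one₀ (h _) (abs_nonneg _) (h _)
    _ = Fintype.card ι := by simp

variable [MeasurableSpace Ω] {P : Measure Ω} [IsProbabilityMeasure P] {Γ : ι × κ → Ω → ℝ}

theorem integral_colGram_sq (hΓ : ∀ p, Measurable (Γ p)) (hbdd : ∀ᵐ ω ∂P, ∀ p, |Γ p ω| ≤ 1)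
    (j k : κ) :
    ∫ ω, colGram Γ j k ω ^ 2 ∂P =
      ∑ i, ∑ l, ∫ ω, (Γ (i, j) ω * Γ (i, k) ω) * (Γ (l, j) ω * Γ (l, k) ω) ∂P := by
  have hint (i l : ι) :
      Integrable (fun ω => (Γ (i, j) ω * Γ (i, k) ω) * (Γ (l, j) ω * Γ (l, k) ω)) P :=
    .of_bound (by fun_prop) 1 (by
      filter_upwards [hbdd] with ω h
      simp only [norm_mul, Real.norm_eq_abs]
      exact mul_le_one₀ (mul_le_one₀ (h _) (abs_nonneg _) (h _)) (by positivity)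
        (mul_le_one₀ (h _) (abs_nonneg _) (h _)))
  simp_rw [colGram, sq, sum_mul_sum]
  rw [integral_finsetSum _ fun i _ => integrable_finsetSum _ fun l _ => hint i l]
  exact sum_congr rfl fun i _ => integral_finsetSum _ fun l _ => hint i l

variable {s : ℝ}

theorem integral_colGram_sq_le_of_eq (hΓ : ∀ p, Measurable (Γ p)) (hind : iIndepFun Γ P)
    (hbdd : ∀ᵐ ω ∂P, ∀ p, |Γ p ω| ≤ 1) (hvar : ∀ p, ∫ ω, Γ p ω ^ 2 ∂P ≤ s) (j : κ) :
    ∫ ω, colGram Γ j j ω ^ 2 ∂P ≤ Fintype.card ι * s + Fintype.card ι ^ 2 * s ^ 2 := by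
  classical
  rw [integral_colGram_sq hΓ hbdd]
  calc _ ≤ ∑ i : ι, ∑ l : ι, ((if i = l then s else 0) + s ^ 2) :=
        sum_le_sum fun i _ => sum_le_sum fun l _ =>
          integral_rowPair_mul_le_of_col_eq hΓ hind hbdd hvar i l j
    _ = _ := by simp [sum_add_distrib]; ring

theorem integral_colGram_sq_le_of_ne (hΓ : ∀ p, Measurable (Γ p)) (hind : iIndepFun Γ P)
    (hbdd : ∀ᵐ ω ∂P, ∀ p, |Γ p ω| ≤ 1) (hmean : ∀ p, ∫ ω, Γ p ω ∂P = 0)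
    (hvar : ∀ p, ∫ ω, Γ p ω ^ 2 ∂P ≤ s) {j k : κ} (hjk : j ≠ k) :
    ∫ ω, colGram Γ j k ω ^ 2 ∂P ≤ Fintype.card ι * s ^ 2 := by
  classical
  rw [integral_colGram_sq hΓ hbdd]
  calc _ ≤ ∑ i : ι, ∑ l : ι, (if i = l then s ^ 2 else 0) :=
        sum_le_sum fun i _ => sum_le_sum fun l _ =>
          integral_rowPair_mul_le_of_col_ne hΓ hind hmean hvar i l hjk
    _ = _ := by simp

end ColumnGram

section WeightedSum

variable {Ω ι κ : Type*} [Fintype ι] [Fintype κ]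

theorem sum_sq_weighted_sum_eq_sum_colGram (Γ : ι × κ → Ω → ℝ) (b : κ → Ω → ℝ) (ω : Ω) :
    ∑ i, (∑ j, Γ (i, j) ω * b j ω) ^ 2 = ∑ j, ∑ k, colGram Γ j k ω * (b j ω * b k ω) := by
  simp_rw [sq, sum_mul_sum]
  simp only [colGram, sum_mul]
  rw [sum_comm]
  refine sum_congr rfl fun j _ => ?_
  rw [sum_comm]
  exact sum_congr rfl fun k _ => sum_congr rfl fun i _ => by ring

variable [MeasurableSpace Ω] {P : Measure Ω} {Γ : ι × κ → Ω → ℝ} {b : κ → Ω → ℝ}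

theorem sum_integral_sq_weighted_sum_eq (hΓ : ∀ p, Measurable (Γ p))
    (hbdd : ∀ᵐ ω ∂P, ∀ p, |Γ p ω| ≤ 1) (hbb : ∀ j k, Integrable (fun ω => b j ω * b k ω) P) :
    ∑ i, ∫ ω, (∑ j, Γ (i, j) ω * b j ω) ^ 2 ∂P =
      ∑ j, ∑ k, ∫ ω, colGram Γ j k ω * (b j ω * b k ω) ∂P := by
  have hterm (i : ι) (j k : κ) :
      Integrable (fun ω => Γ (i, j) ω * Γ (i, k) ω * (b j ω * b k ω)) P :=
    (hbb j k).bdd_mul (by fun_prop) (by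
      filter_upwards [hbdd] with ω h
      rw [norm_mul, Real.norm_eq_abs, Real.norm_eq_abs]
      exact mul_le_one₀ (h _) (abs_nonneg _) (h _))
  have hsq (i : ι) : Integrable (fun ω => (∑ j, Γ (i, j) ω * b j ω) ^ 2) P := by
    refine (integrable_finsetSum univ fun j _ => integrable_finsetSum univ fun k _ =>
      hterm i j k).congr (ae_of_all _ fun ω => ?_)
    simp only [sq, sum_mul_sum]
    exact sum_congr rfl fun j _ => sum_congr rfl fun k _ => by ring
  have hgram (j k : κ) : Integrable (fun ω => colGram Γ j k ω * (b j ω * b k ω)) P := by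
    refine (integrable_finsetSum univ fun i _ => hterm i j k).congr (ae_of_all _ fun ω => ?_)
    simp only [colGram, sum_mul]
  rw [← integral_finsetSum _ fun i _ => hsq i]
  simp_rw [sum_sq_weighted_sum_eq_sum_colGram]
  rw [integral_finsetSum _ fun j _ => integrable_finsetSum _ fun k _ => hgram j k]
  exact sum_congr rfl fun j _ => integral_finsetSum _ fun k _ => hgram j k

theorem sum_integral_sq_weighted_sum_le [IsProbabilityMeasure P] [DecidableEq κ]
    (hΓ : ∀ p, Measurable (Γ p)) (hind : iIndepFun Γ P) (hbdd : ∀ᵐ ω ∂P, ∀ p, |Γ p ω| ≤ 1) (hmean : ∀ p, ∫ ω, Γ p ω ∂P = 0)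
    {s : ℝ} (hvar : ∀ p, ∫ ω, Γ p ω ^ 2 ∂P ≤ s) (hb : ∀ j, Measurable (b j))
    (hb4 : ∀ j, Integrable (fun ω => b j ω ^ 4) P) {M : ℝ} (hbM : ∀ j, ∫ ω, b j ω ^ 4 ∂P ≤ M) :
    ∑ i, ∫ ω, (∑ j, Γ (i, j) ω * b j ω) ^ 2 ∂P ≤
      √M * (Fintype.card κ * √(Fintype.card ι * s + Fintype.card ι ^ 2 * s ^ 2) +
        Fintype.card κ ^ 2 * √(Fintype.card ι * s ^ 2)) := by
  set A := (Fintype.card ι : ℝ) * s + Fintype.card ι ^ 2 * s ^ 2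
  set B := (Fintype.card ι : ℝ) * s ^ 2
  have hbb2 (j k : κ) : MemLp (fun ω => b j ω * b k ω) 2 P :=
    (memLp_two_iff_integrable_sq (by fun_prop)).2 <| integrable_mul_sq_of_integrable_pow_four
      (hb j).aestronglyMeasurable (hb k).aestronglyMeasurable (hb4 j) (hb4 k)
  have hgram2 (j k : κ) : MemLp (colGram Γ j k) 2 P :=
    .of_bound (by unfold colGram; fun_prop) (Fintype.card ι) (by
      filter_upwards [hbdd] with ω h using abs_colGram_le h j k)
  have hgram_sq (j k : κ) : ∫ ω, colGram Γ j k ω ^ 2 ∂P ≤ if j = k then A else B := by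
    split_ifs with hjk
    · subst hjk; exact integral_colGram_sq_le_of_eq hΓ hind hbdd hvar j
    · exact integral_colGram_sq_le_of_ne hΓ hind hbdd hmean hvar hjk
  have hpair (j k : κ) : ∫ ω, colGram Γ j k ω * (b j ω * b k ω) ∂P ≤
      √M * ((if j = k then √A else 0) + √B) := by
    calc ∫ ω, colGram Γ j k ω * (b j ω * b k ω) ∂P
        ≤ √(∫ ω, colGram Γ j k ω ^ 2 ∂P) * √(∫ ω, (b j ω * b k ω) ^ 2 ∂P) :=
          integral_mul_le_sqrt_mul_sqrt (hgram2 j k) (hbb2 j k)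
      _ ≤ ((if j = k then √A else 0) + √B) * √M := by
          gcongr
          · calc √(∫ ω, colGram Γ j k ω ^ 2 ∂P) ≤ √(if j = k then A else B) :=
                  Real.sqrt_le_sqrt (hgram_sq j k)
              _ ≤ (if j = k then √A else 0) + √B := by split_ifs <;> simp
          · exact integral_mul_sq_le_of_integral_pow_four_le (hb j).aestronglyMeasurable
              (hb k).aestronglyMeasurable (hb4 j) (hb4 k) (hbM j) (hbM k)
      _ = √M * ((if j = k then √A else 0) + √B) := mul_comm _ _
  rw [sum_integral_sq_weighted_sum_eq hΓ hbdd fun j k => (hbb2 j k).integrable one_le_two]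
  calc ∑ j, ∑ k, ∫ ω, colGram Γ j k ω * (b j ω * b k ω) ∂P
      ≤ ∑ j : κ, ∑ k : κ, √M * ((if j = k then √A else 0) + √B) :=
        sum_le_sum fun j _ => sum_le_sum fun k _ => hpair j k
    _ = _ := by simp [← mul_sum, sum_add_distrib]; ring

end WeightedSum

theorem sqrt_add_le_sqrt_add_sqrt {x y : ℝ} (hx : 0 ≤ x) (hy : 0 ≤ y) : √(x + y) ≤ √x + √y :=
  Real.sqrt_le_iff.2 ⟨by positivity, by
    nlinarith [Real.sq_sqrt hx, Real.sq_sqrt hy, Real.sqrt_nonneg x, Real.sqrt_nonneg y]⟩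

theorem rpow_three_halves {x : ℝ} (hx : 0 < x) : x ^ ((3 : ℝ) / 2) = x * √x := by
  rw [show (3 : ℝ) / 2 = 1 + 1 / 2 by norm_num, Real.rpow_add hx, Real.rpow_one,
    Real.sqrt_eq_rpow]

theorem normalized_bound_le {n β c M : ℝ} (hn : 0 ≤ n) (hβ : 0 < β) (hc : 0 < c) :
    n⁻¹ * ((n * β)⁻¹ ^ 2 *
        (√M * (n * √(n * (c * β) + n ^ 2 * (c * β) ^ 2) + n ^ 2 * √(n * (c * β) ^ 2)))) ≤
      √M * (√c + c) *
        (((n * β) ^ ((3 : ℝ) / 2))⁻¹ + (n * β)⁻¹ + ((n * β ^ 2) ^ ((1 : ℝ) / 2))⁻¹) := by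
  rcases hn.eq_or_lt with rfl | hn
  · simp [Real.zero_rpow]
  have hx : 0 < n * β := by positivity
  have hA : √(n * (c * β) + n ^ 2 * (c * β) ^ 2) ≤ √c * √(n * β) + n * (c * β) :=
    calc √(n * (c * β) + n ^ 2 * (c * β) ^ 2) = √(n * (c * β) + (n * (c * β)) ^ 2) := by
          congr 1; ring
      _ ≤ √(n * (c * β)) + √((n * (c * β)) ^ 2) :=
          sqrt_add_le_sqrt_add_sqrt (by positivity) (by positivity)
      _ = √c * √(n * β) + n * (c * β) := by
          rw [Real.sqrt_sq (by positivity), ← Real.sqrt_mul hc.le]; ring_nf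
  have hB : √(n * (c * β) ^ 2) = √n * (c * β) := by
    rw [Real.sqrt_mul hn.le, Real.sqrt_sq (by positivity)]
  have h12 : (n * β ^ 2) ^ ((1 : ℝ) / 2) = √n * β := by
    rw [← Real.sqrt_eq_rpow, Real.sqrt_mul hn.le, Real.sqrt_sq hβ.le]
  have hsn : √n ^ 2 = n := Real.sq_sqrt hn.le
  have hsx : √(n * β) ^ 2 = n * β := Real.sq_sqrt hx.le
  have : 0 < √n := Real.sqrt_pos.2 hn
  have : 0 < √(n * β) := Real.sqrt_pos.2 hx
  rw [rpow_three_halves hx, h12, hB]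
  calc _ ≤ n⁻¹ * ((n * β)⁻¹ ^ 2 *
        (√M * (n * (√c * √(n * β) + n * (c * β)) + n ^ 2 * (√n * (c * β))))) := by gcongr
    _ = √M * (√c * (n * β * √(n * β))⁻¹ + c * (n * β)⁻¹ + c * (√n * β)⁻¹) := by
        field_simp
        linear_combination (√M * √n * √c) * hsx + (√M * √(n * β) * n * β * c) * hsn
    _ ≤ √M * ((√c + c) * (n * β * √(n * β))⁻¹ + (√c + c) * (n * β)⁻¹ +
          (√c + c) * (√n * β)⁻¹) := by
        have := Real.sqrt_nonneg c
        gcongr <;> linarith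
    _ = _ := by ring

/-- Let `c > 0`, `M > 0`. There is a constant `C = C(c, M)` such that for
every `β ∈ (0,1]`, every `N`, every array `(ζ_{ij})` of mutually independent Bernoulli random
variables with parameters `q_{ij} ≤ cβ`, and all nonnegative random variables `b₁, …, b_N` with
`E[b_j⁴] ≤ M`, setting `Γ_{ij} = ζ_{ij} − q_{ij}`, one has
`(1/N) Σ_i E[((1/(Nβ)) Σ_j Γ_{ij} b_j)²] ≤ C ((Nβ)^{−3/2} + (Nβ)^{−1} + (Nβ²)^{−1/2})`. -/
theorem bernoulli_array_weighted_fluctuation_bound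
    (c M : ℝ) (hc : 0 < c) (hM : 0 < M) :
    ∃ C : ℝ, 0 < C ∧
      ∀ (β : ℝ), β ∈ Set.Ioc (0 : ℝ) 1 →
      ∀ (N : ℕ) (Ω : Type) [MeasurableSpace Ω] (P : Measure Ω) [IsProbabilityMeasure P]
        (ζ : Fin N × Fin N → Ω → ℝ) (q : Fin N → Fin N → ℝ) (b : Fin N → Ω → ℝ),
        (∀ p, Measurable (ζ p)) →
        (∀ i j, 0 ≤ q i j) → (∀ i j, q i j ≤ c * β) → (∀ i j, q i j ≤ 1) →
        (∀ p : Fin N × Fin N, Measure.map (ζ p) P =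
          ENNReal.ofReal (q p.1 p.2) • Measure.dirac (1 : ℝ) +
            ENNReal.ofReal (1 - q p.1 p.2) • Measure.dirac (0 : ℝ)) →
        iIndepFun ζ P →
        (∀ j, Measurable (b j)) → (∀ j ω, 0 ≤ b j ω) →
        (∀ j, Integrable (fun ω => b j ω ^ 4) P) →
        (∀ j, ∫ ω, b j ω ^ 4 ∂P ≤ M) →
        (N : ℝ)⁻¹ * ∑ i, ∫ ω,
            (((N : ℝ) * β)⁻¹ * ∑ j, (ζ (i, j) ω - q i j) * b j ω) ^ 2 ∂P ≤
          C * ((((N : ℝ) * β) ^ ((3 : ℝ) / 2))⁻¹ + ((N : ℝ) * β)⁻¹ +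
            (((N : ℝ) * β ^ 2) ^ ((1 : ℝ) / 2))⁻¹) := by
  refine ⟨√M * (√c + c), by positivity, ?_⟩
  rintro β ⟨hβ, -⟩ N Ω _ P _ ζ q b hζ hq0 hqβ hq1 hlaw hind hb - hb4 hbM
  set Γ : Fin N × Fin N → Ω → ℝ := fun p ω => ζ p ω - q p.1 p.2
  have hΓ (p : Fin N × Fin N) : Measurable (Γ p) := (hζ p).sub_const _
  have hΓind : iIndepFun Γ P := hind.comp _ fun p => measurable_id.sub_const _
  have hbdd : ∀ᵐ ω ∂P, ∀ p, |Γ p ω| ≤ 1 := ae_all_iff.2 fun p =>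
    IsBernoulli.abs_sub_le_one_ae (hlaw p) (hζ p) (hq0 _ _) (hq1 _ _)
  have hmean (p : Fin N × Fin N) : ∫ ω, Γ p ω ∂P = 0 :=
    IsBernoulli.integral_sub_eq_zero (hlaw p) (hζ p) (hq0 _ _) (hq1 _ _)
  have hvar (p : Fin N × Fin N) : ∫ ω, Γ p ω ^ 2 ∂P ≤ c * β :=
    (IsBernoulli.integral_sub_sq_le (hlaw p) (hζ p) (hq0 _ _) (hq1 _ _)).trans (hqβ _ _)
  have hsum := sum_integral_sq_weighted_sum_le hΓ hΓind hbdd hmean hvar hb hb4 hbM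
  rw [Fintype.card_fin] at hsum
  calc _ = (N : ℝ)⁻¹ * (((N : ℝ) * β)⁻¹ ^ 2 * ∑ i, ∫ ω, (∑ j, Γ (i, j) ω * b j ω) ^ 2 ∂P) := by
        simp_rw [mul_pow, integral_const_mul, ← mul_sum]; rfl
    _ ≤ _ := by gcongr
    _ ≤ _ := normalized_bound_le (Nat.cast_nonneg N) hβ hc
end
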